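/- arXiv:2602.15483 — 2 statements merged into one kernel-verified Lean document; each statement's English description precedes it below -/
import Mathlib

section
/- Let V = (Q,T) be a d-VASS with n states and geometric dimension g whose strongly connected components form a chain (the condensation is a directed path with consecutive SCCs connected by a single transition). Then for every configuration p(u) and every sorted vector C = (C_0, C_1, …, C_{g−1}) ∈ ℕ^g (with C_0 ≤ C_1 ≤ … ≤ C_{g−1}), the number of C-thin configurations reachable from p(u) is at most n · d^g · ∏_{i=0}^{g−1} C_i. -/
open Finset


/-- A transition of a `d`-dimensional VASS with state space `Fin n`:
source state, effect vector, target state. -/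
abbrev Transition (n d : ℕ) := Fin n × (Fin d → ℤ) × Fin n

/-- A `d`-VASS with states `Fin n`, given by its finite set of transitions. -/
abbrev VASS (n d : ℕ) := Finset (Transition n d)

/-- A path: a sequence of transitions of `T` in which the target state of each
transition equals the source state of the next. -/
def IsPath {n d : ℕ} (T : VASS n d) (ts : List (Transition n d)) : Prop :=
  (∀ t ∈ ts, t ∈ T) ∧ ts.Chain' (fun t t' => t.2.2 = t'.1)

/-- The effect of a path: the sum of the vectors of its transitions. -/
def effect {n d : ℕ} (ts : List (Transition n d)) : Fin d → ℤ :=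
  (ts.map (fun t => t.2.1)).sum

/-- A cycle: a nonempty path whose first source state equals its last target state. -/
def IsCycle {n d : ℕ} (T : VASS n d) (ts : List (Transition n d)) : Prop :=
  IsPath T ts ∧ ∃ h : ts ≠ [], (ts.getLast h).2.2 = (ts.head h).1

/-- Embedding of integer vectors into rational vectors. -/
def toQ {d : ℕ} (v : Fin d → ℤ) : Fin d → ℚ := fun i => (v i : ℚ)

/-- The cycle space of a VASS: the ℚ-vector space spanned by the effects of all cycles. -/
def cycleSpace {n d : ℕ} (T : VASS n d) : Submodule ℚ (Fin d → ℚ) :=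
  Submodule.span ℚ { x | ∃ ts, IsCycle T ts ∧ x = toQ (effect ts) }

/-- The geometric dimension of a VASS: the dimension of its cycle space. -/
noncomputable def geomDim {n d : ℕ} (T : VASS n d) : ℕ :=
  Module.finrank ℚ (cycleSpace T)


/-- A configuration: a state together with nonnegative counter values. -/
abbrev Config (n d : ℕ) := Fin n × (Fin d → ℕ)

/-- One step of a VASS between configurations. -/
def Step {n d : ℕ} (T : VASS n d) (c c' : Config n d) : Prop :=
  ∃ a : Fin d → ℤ, (c.1, a, c'.1) ∈ T ∧ ∀ i, (c'.2 i : ℤ) = (c.2 i : ℤ) + a i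

/-- A run from `c` visiting the configurations `cs` (in order); its length is `cs.length`. -/
def IsRunFrom {n d : ℕ} (T : VASS n d) (c : Config n d) (cs : List (Config n d)) : Prop :=
  List.Chain (Step T) c cs

/-- The final configuration of a run from `c` through `cs`. -/
def runEnd {n d : ℕ} (c : Config n d) (cs : List (Config n d)) : Config n d :=
  (c :: cs).getLast (List.cons_ne_nil _ _)

/-- Reachability between configurations. -/
def Reachable {n d : ℕ} (T : VASS n d) (c c' : Config n d) : Prop :=
  ∃ cs, IsRunFrom T c cs ∧ runEnd c cs = c'


/-- Edge relation on states induced by the transitions. -/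
def StateEdge {n d : ℕ} (T : VASS n d) (p q : Fin n) : Prop := ∃ a, (p, a, q) ∈ T

/-- Reachability between states along transitions. -/
def StateReach {n d : ℕ} (T : VASS n d) : Fin n → Fin n → Prop :=
  Relation.ReflTransGen (StateEdge T)

/-- The strongly connected components of the VASS form a chain: there is a `level`
function whose classes are exactly the SCCs, transitions stay in a level or move to
the next one, consecutive levels are connected by exactly one transition, and the
occupied levels form an initial segment of ℕ. -/
def SCCChain {n d : ℕ} (T : VASS n d) : Prop :=
  ∃ level : Fin n → ℕ,
    (∀ p q, (StateReach T p q ∧ StateReach T q p) ↔ level p = level q) ∧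
    (∀ t ∈ T, level t.2.2 = level t.1 ∨ level t.2.2 = level t.1 + 1) ∧
    (∀ ℓ : ℕ, (∃ p, level p = ℓ + 1) →
      ∃! t, t ∈ T ∧ level t.1 = ℓ ∧ level t.2.2 = ℓ + 1) ∧
    (∀ p : Fin n, ∀ k ≤ level p, ∃ q, level q = k)


/-- A clean basis of a subspace `U ⊆ ℚ^d`: a basis `b 1, …, b g` together with
injectively chosen distinguished coordinates `K 1, …, K g` on which the basis
vectors form the `g × g` identity matrix. -/
def IsCleanBasis {d g : ℕ} (U : Submodule ℚ (Fin d → ℚ)) (b : Fin g → (Fin d → ℚ))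
    (K : Fin g → Fin d) : Prop :=
  LinearIndependent ℚ b ∧ Submodule.span ℚ (Set.range b) = U ∧
  Function.Injective K ∧ ∀ i j, b i (K j) = if i = j then 1 else 0


/-- `w ∈ ℕ^g` is `C`-bounded (for sorted `C`): for every `k ∈ {1,…,g}`, the number of
indices `i` with `w i ≥ C (g − k)` is strictly less than `k`. Here `k.rev = g − 1 − k`
plays the role of `g − (k+1)`. -/
def CBounded {g : ℕ} (C : Fin g → ℕ) (w : Fin g → ℕ) : Prop :=
  ∀ k : Fin g, (Finset.univ.filter (fun i => C k.rev ≤ w i)).card < (k : ℕ) + 1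

/-- A vector `v ∈ ℕ^d` is `C`-thin with respect to `U` if some clean basis of `U`
has a `C`-bounded projection of `v` to the distinguished coordinates. -/
def CThin {d : ℕ} (g : ℕ) (U : Submodule ℚ (Fin d → ℚ)) (C : Fin g → ℕ)
    (v : Fin d → ℕ) : Prop :=
  ∃ (b : Fin g → (Fin d → ℚ)) (K : Fin g → Fin d),
    IsCleanBasis U b K ∧ CBounded C (fun j => v (K j))

/-! Every configuration reachable from `p(u)` in state `q` has counters `u + e` for the effect
`e` of some path from `p` to `q`. When the SCCs form a chain, every path from `p` to `q` crosses
the same bridge transitions and otherwise stays inside SCCs, where any two paths between the same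
states differ by cycle effects. So the counter vectors of two reachable configurations in the same
state differ by an element of the cycle space `U`. An element of `U` vanishing on the
distinguished coordinates of a clean basis is zero; hence a reachable configuration is determined
by its state, the distinguished coordinates `K` and its values on them. For a `C`-thin vector,
ordering `K` so that the values increase puts the `i`-th value below `C i`, which leaves at most
`n · d ^ g · ∏ C i` such triples. -/

section Paths

variable {n d : ℕ} {T : VASS n d}

@[simp]
lemma toQ_zero : toQ (0 : Fin d → ℤ) = 0 := by
  funext i; simp [toQ]

@[simp]
lemma toQ_add (x y : Fin d → ℤ) : toQ (x + y) = toQ x + toQ y := by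
  funext i; simp [toQ]

inductive HasPath (T : VASS n d) : Fin n → Fin n → (Fin d → ℤ) → Prop
  | nil (a : Fin n) : HasPath T a a 0
  | cons {a b c : Fin n} {v e : Fin d → ℤ} :
      (a, v, b) ∈ T → HasPath T b c e → HasPath T a c (v + e)

lemma HasPath.single {a b : Fin n} {v : Fin d → ℤ} (h : (a, v, b) ∈ T) : HasPath T a b v := by
  simpa using HasPath.cons h (.nil b)

lemma HasPath.trans {a b c : Fin n} {e f : Fin d → ℤ}
    (h₁ : HasPath T a b e) (h₂ : HasPath T b c f) : HasPath T a c (e + f) := by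
  induction h₁ with
  | nil => simpa using h₂
  | cons ht _ ih => simpa only [add_assoc] using HasPath.cons ht (ih h₂)

lemma StateReach.exists_hasPath {a b : Fin n} (h : StateReach T a b) : ∃ e, HasPath T a b e := by
  induction h with
  | refl => exact ⟨0, .nil _⟩
  | tail _ hbc ih =>
    obtain ⟨e, he⟩ := ih
    obtain ⟨v, hv⟩ := hbc
    exact ⟨e + v, he.trans (.single hv)⟩

lemma HasPath.exists_isPath_cons {b c : Fin n} {e : Fin d → ℤ} (h : HasPath T b c e)
    {t : Transition n d} (ht : t ∈ T) (htb : t.2.2 = b) :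
    ∃ ts, IsPath T (t :: ts) ∧ effect (t :: ts) = t.2.1 + e ∧
      ((t :: ts).getLast (List.cons_ne_nil _ _)).2.2 = c := by
  induction h generalizing t with
  | nil => exact ⟨[], ⟨by simpa using ht, List.isChain_singleton _⟩, by simp [effect], htb⟩
  | cons hxy _ ih =>
    obtain ⟨ts, ⟨hmem, hchain⟩, heff, hlast⟩ := ih hxy rfl
    refine ⟨_ :: ts, ⟨List.forall_mem_cons.2 ⟨ht, hmem⟩, List.isChain_cons_cons.2 ⟨htb, hchain⟩⟩,
      ?_, by rwa [List.getLast_cons (List.cons_ne_nil _ _)]⟩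
    rw [effect, List.map_cons, List.sum_cons, ← effect, heff]

lemma HasPath.toQ_mem_cycleSpace {a b : Fin n} {e : Fin d → ℤ} (h : HasPath T a b e)
    (hab : a = b) : toQ e ∈ cycleSpace T := by
  cases h with
  | nil => simp
  | cons ht hp =>
    obtain ⟨ts, hpath, heff, hlast⟩ := hp.exists_isPath_cons ht rfl
    exact Submodule.subset_span ⟨_, ⟨hpath, List.cons_ne_nil _ _, hlast.trans hab.symm⟩, by rw [heff]⟩

lemma HasPath.toQ_sub_mem_cycleSpace_of_stateReach {a b : Fin n} {e₁ e₂ : Fin d → ℤ}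
    (h₁ : HasPath T a b e₁) (h₂ : HasPath T a b e₂) (hba : StateReach T b a) :
    toQ e₁ - toQ e₂ ∈ cycleSpace T := by
  obtain ⟨f, hf⟩ := hba.exists_hasPath
  simpa using sub_mem ((h₁.trans hf).toQ_mem_cycleSpace rfl) ((h₂.trans hf).toQ_mem_cycleSpace rfl)

lemma HasPath.level_le {level : Fin n → ℕ}
    (hlevel : ∀ t ∈ T, level t.2.2 = level t.1 ∨ level t.2.2 = level t.1 + 1)
    {a b : Fin n} {e : Fin d → ℤ} (h : HasPath T a b e) : level a ≤ level b := by
  induction h with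
  | nil => rfl
  | cons ht _ ih => have := hlevel _ ht; dsimp only at this; omega

lemma HasPath.exists_split {level : Fin n → ℕ}
    (hlevel : ∀ t ∈ T, level t.2.2 = level t.1 ∨ level t.2.2 = level t.1 + 1)
    {a b : Fin n} {e : Fin d → ℤ} {t : Transition n d}
    (hbridge : ∀ t' ∈ T, level t'.1 < level b → level t'.2.2 = level b → t' = t)
    (h : HasPath T a b e) (hab : level a < level b) :
    ∃ e₁ e₂, HasPath T a t.1 e₁ ∧ HasPath T t.2.2 b e₂ ∧ e = e₁ + t.2.1 + e₂ := by
  induction h with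
  | nil => omega
  | @cons a x b v e hax hxb ih =>
    rcases (hxb.level_le hlevel).lt_or_eq with hlt | heq
    · obtain ⟨e₁, e₂, h₁, h₂, rfl⟩ := ih hbridge hlt
      exact ⟨v + e₁, e₂, .cons hax h₁, h₂, by abel⟩
    · obtain rfl := hbridge _ hax hab heq
      exact ⟨0, e, .nil a, hxb, by simp⟩

/-- Split both paths at the bridge entering the level of `b` and induct on the level difference;
within one SCC, both paths are closed into cycles by the same path back. -/
theorem SCCChain.toQ_sub_mem_cycleSpace (hT : SCCChain T) {a b : Fin n} {e₁ e₂ : Fin d → ℤ}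
    (h₁ : HasPath T a b e₁) (h₂ : HasPath T a b e₂) : toQ e₁ - toQ e₂ ∈ cycleSpace T := by
  obtain ⟨level, hscc, hlevel, hbridges, -⟩ := hT
  obtain ⟨k, hk⟩ := Nat.exists_eq_add_of_le (h₁.level_le hlevel)
  induction k generalizing b e₁ e₂ with
  | zero => exact h₁.toQ_sub_mem_cycleSpace_of_stateReach h₂ ((hscc b a).2 hk).1
  | succ k ih =>
    obtain ⟨t, ⟨-, hsrc, htgt⟩, huniq⟩ := hbridges (level a + k) ⟨b, hk⟩
    have hbridge : ∀ t' ∈ T, level t'.1 < level b → level t'.2.2 = level b → t' = t := by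
      intro t' ht' hlt heq
      have := hlevel t' ht'
      exact huniq t' ⟨ht', by omega, by omega⟩
    obtain ⟨x₁, y₁, hx₁, hy₁, rfl⟩ := h₁.exists_split hlevel hbridge (by omega)
    obtain ⟨x₂, y₂, hx₂, hy₂, rfl⟩ := h₂.exists_split hlevel hbridge (by omega)
    have hx := ih hx₁ hx₂ hsrc
    have hy := hy₁.toQ_sub_mem_cycleSpace_of_stateReach hy₂ ((hscc b t.2.2).2 (by omega)).1
    convert add_mem hx hy using 1
    simp only [toQ_add]
    abel

lemma Reachable.exists_hasPath {c c' : Config n d} (h : Reachable T c c') :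
    ∃ e, HasPath T c.1 c'.1 e ∧ ∀ i, (c'.2 i : ℤ) = c.2 i + e i := by
  obtain ⟨cs, hrun, rfl⟩ := h
  induction cs generalizing c with
  | nil => exact ⟨0, .nil _, fun i => by simp [runEnd]⟩
  | cons c₁ cs ih =>
    obtain ⟨⟨a, ha, hstep⟩, hrun⟩ := List.isChain_cons_cons.1 hrun
    obtain ⟨e, he, hend⟩ := ih hrun
    have hlast : runEnd c (c₁ :: cs) = runEnd c₁ cs := by simp [runEnd]
    refine ⟨a + e, by rw [hlast]; exact .cons ha he, fun i => ?_⟩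
    rw [hlast, hend i, hstep i, Pi.add_apply, add_assoc]

theorem SCCChain.sub_mem_cycleSpace_of_reachable (hT : SCCChain T) {s c c' : Config n d}
    (hc : Reachable T s c) (hc' : Reachable T s c') (hq : c.1 = c'.1) :
    (fun i => (c.2 i : ℚ)) - (fun i => (c'.2 i : ℚ)) ∈ cycleSpace T := by
  obtain ⟨e, he, hce⟩ := hc.exists_hasPath
  obtain ⟨e', he', hce'⟩ := hc'.exists_hasPath
  rw [← hq] at he'
  convert hT.toQ_sub_mem_cycleSpace he he' using 1
  funext i
  have h : (c.2 i : ℤ) - c'.2 i = e i - e' i := by rw [hce i, hce' i]; ring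
  simp only [Pi.sub_apply, toQ]
  exact_mod_cast h

end Paths

section Thin

variable {d g : ℕ} {U : Submodule ℚ (Fin d → ℚ)} {b : Fin g → Fin d → ℚ} {K : Fin g → Fin d}

lemma IsCleanBasis.eq_of_sub_mem (hb : IsCleanBasis U b K) {x y : Fin d → ℚ} (hxy : x - y ∈ U)
    (hK : ∀ j, x (K j) = y (K j)) : x = y := by
  obtain ⟨-, hspan, -, hbK⟩ := hb
  rw [← hspan] at hxy
  obtain ⟨c, hc⟩ := (Submodule.mem_span_range_iff_exists_fun ℚ).1 hxy
  have hc0 : ∀ j, c j = 0 := fun j => by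
    simpa [hK, hbK, Finset.sum_apply] using congrFun hc (K j)
  rw [← sub_eq_zero, ← hc]
  simp [hc0]

lemma IsCleanBasis.comp_perm (hb : IsCleanBasis U b K) (σ : Equiv.Perm (Fin g)) :
    IsCleanBasis U (b ∘ σ) (K ∘ σ) := by
  obtain ⟨hli, hspan, hK, hbK⟩ := hb
  refine ⟨hli.comp σ σ.injective, ?_, hK.comp σ.injective, fun i j => ?_⟩
  · rwa [Set.range_comp, σ.range_eq_univ, Set.image_univ]
  · simp [hbK]

/-- Sorting `w` increasingly puts its `i`-th value below `C i`: otherwise the `g - i` largest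
values are all at least `C i`, which `CBounded` forbids for `k = i.rev`. -/
lemma CBounded.exists_perm_lt {C w : Fin g → ℕ} (h : CBounded C w) :
    ∃ σ : Equiv.Perm (Fin g), ∀ i, w (σ i) < C i := by
  refine ⟨Tuple.sort w, fun i => not_le.1 fun hle => ?_⟩
  have hcard : (Finset.Ici i).card ≤ (univ.filter fun j => C i ≤ w j).card := by
    refine Finset.card_le_card_of_injOn (Tuple.sort w) (fun j hj => ?_)
      (Tuple.sort w).injective.injOn
    simpa using hle.trans (Tuple.monotone_sort w (Finset.mem_Ici.1 hj))
  have := h i.rev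
  rw [Fin.rev_rev, Fin.val_rev] at this
  rw [Fin.card_Ici] at hcard
  omega

lemma CThin.exists_cleanBasis_lt {C : Fin g → ℕ} {v : Fin d → ℕ} (h : CThin g U C v) :
    ∃ K : Fin g → Fin d, (∃ b, IsCleanBasis U b K) ∧ ∀ i, v (K i) < C i := by
  obtain ⟨b, K, hb, hC⟩ := h
  obtain ⟨σ, hσ⟩ := hC.exists_perm_lt
  exact ⟨K ∘ σ, ⟨b ∘ σ, hb.comp_perm σ⟩, hσ⟩

end Thin

theorem SCCChain.eq_of_reachable_of_isCleanBasis {n d g : ℕ} {T : VASS n d} (hT : SCCChain T)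
    {b : Fin g → Fin d → ℚ} {K : Fin g → Fin d} (hb : IsCleanBasis (cycleSpace T) b K)
    {s c c' : Config n d} (hc : Reachable T s c) (hc' : Reachable T s c') (hq : c.1 = c'.1)
    (hK : ∀ j, c.2 (K j) = c'.2 (K j)) : c = c' := by
  have := hb.eq_of_sub_mem (hT.sub_mem_cycleSpace_of_reachable hc hc' hq) fun j => by
    simp [hK j]
  exact Prod.ext hq (funext fun i => by exact_mod_cast congrFun this i)

theorem card_thin_reachable_le_general {n d g : ℕ} (T : VASS n d)
    (hchain : SCCChain T)
    (p : Fin n) (u : Fin d → ℕ) (C : Fin g → ℕ) :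
    {c : Config n d | Reachable T (p, u) c ∧ CThin g (cycleSpace T) C c.2}.Finite ∧
    {c : Config n d | Reachable T (p, u) c ∧ CThin g (cycleSpace T) C c.2}.ncard ≤
      n * d ^ g * ∏ i, C i := by
  set S := {c : Config n d | Reachable T (p, u) c ∧ CThin g (cycleSpace T) C c.2}
  choose K hK hlt using fun c : S => c.2.2.exists_cleanBasis_lt
  let B : Finset (Fin n × (Fin g → Fin d) × (Fin g → ℕ)) :=
    univ ×ˢ univ ×ˢ Fintype.piFinset fun i => range (C i)
  let key : S → B := fun c => ⟨(c.1.1, K c, c.1.2 ∘ K c), by simpa [B] using hlt c⟩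
  have hinj : Function.Injective key := by
    intro c c' hkey
    have hkey' := congrArg Subtype.val hkey
    simp only [key, Prod.mk.injEq] at hkey'
    obtain ⟨hq, hKc, hv⟩ := hkey'
    obtain ⟨b, hb⟩ := hK c
    refine Subtype.ext (hchain.eq_of_reachable_of_isCleanBasis hb c.2.1 c'.2.1 hq fun j => ?_)
    simpa [hKc] using congrFun hv j
  have : Finite S := .of_injective key hinj
  refine ⟨S.toFinite, ?_⟩
  calc S.ncard = Nat.card S := rfl
    _ ≤ Nat.card B := Nat.card_le_card_of_injective key hinj
    _ = n * d ^ g * ∏ i, C i := by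
      rw [Nat.card_eq_fintype_card, Fintype.card_coe]
      simp [B, mul_assoc]

/-- In a VASS with n states and geometric dimension g whose SCCs form a chain,
for any configuration p(u) and any sorted C ∈ ℕ^g, the set of C-thin configurations
reachable from p(u) is finite of cardinality at most n·d^g·∏ C_i. -/
theorem card_thin_reachable_le {n d g : ℕ} (T : VASS n d)
    (hchain : SCCChain T) (hg : geomDim T = g)
    (p : Fin n) (u : Fin d → ℕ) (C : Fin g → ℕ) (hsorted : Monotone C) :
    {c : Config n d | Reachable T (p, u) c ∧ CThin g (cycleSpace T) C c.2}.Finite ∧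
    {c : Config n d | Reachable T (p, u) c ∧ CThin g (cycleSpace T) C c.2}.ncard ≤
      n * d ^ g * ∏ i, C i :=
  card_thin_reachable_le_general T hchain p u C
end

section
/- Let U ⊆ ℚ^d be a g-dimensional vector subspace, v ∈ ℕ^d, and let C = (C_0, …, C_{g−1}) ∈ ℕ^g be sorted (C_0 ≤ … ≤ C_{g−1}). If v is C-thick with respect to U, then there exists a clean basis B = {b_1, …, b_g} of U, a number k ∈ {1,…,g}, and a set S = {i_1, …, i_k} ⊆ {1,…,g} of k indices such that for every i ∈ S and every j ∈ {1,…,d}, b_i[j] ≠ 0 implies v[j] ≥ C_{g−k}. -/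
open Finset


/-!
Order the coordinates by their value in `v` and take the reduced row echelon basis of `U` for
this order: every basis vector `b i` is supported on coordinates whose `v`-value is at least that
of its pivot `K i`. This is a clean basis with distinguished coordinates `K`, so thickness says
that the pivot values `v ∘ K` are not `C`-bounded: for some `k`, at least `k` pivots have value
`≥ C (g - k)`, and then so does every coordinate in the support of the corresponding basis vectors.
-/

open Module Submodule

section Echelon

variable {F ι α : Type*} [Field F] [LinearOrder α] {n : ℕ}

theorem linearIndependent_of_apply_eq_ite {b : Fin n → ι → F} {K : Fin n → ι}
    (h : ∀ i j, b i (K j) = if i = j then 1 else 0) : LinearIndependent F b := by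
  rw [Fintype.linearIndependent_iff]
  intro c hc i
  simpa [Finset.sum_apply, h] using congrFun hc (K i)

/-- `b` is the reduced row echelon basis of `X` with pivots `K`, for the column order given by
`p`. -/
structure IsEchelonBasis (X : Submodule F (ι → F)) (p : ι → α) (b : Fin n → ι → F)
    (K : Fin n → ι) : Prop where
  span_eq : span F (Set.range b) = X
  apply_pivot : ∀ i j, b i (K j) = if i = j then 1 else 0
  le_of_apply_ne_zero : ∀ i j, b i j ≠ 0 → p (K i) ≤ p j

theorem IsEchelonBasis.cons {X : Submodule F (ι → F)} {p : ι → α} {b : Fin n → ι → F}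
    {K : Fin n → ι} {j₀ : ι} (hb : IsEchelonBasis (X ⊓ LinearMap.ker (LinearMap.proj j₀)) p b K)
    {a : ι → F} (ha : a ∈ X) (haj : a j₀ = 1) (hmin : ∀ x ∈ X, ∀ j, x j ≠ 0 → p j₀ ≤ p j) :
    IsEchelonBasis X p (Fin.cons (a - ∑ i, a (K i) • b i) b) (Fin.cons j₀ K) := by
  have hbX (i : Fin n) : b i ∈ X ⊓ LinearMap.ker (LinearMap.proj j₀) :=
    hb.span_eq ▸ subset_span ⟨i, rfl⟩
  have hbj (i : Fin n) : b i j₀ = 0 := (hbX i).2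
  set b₀ := a - ∑ i, a (K i) • b i
  have hb₀X : b₀ ∈ X := sub_mem ha (sum_mem fun i _ => smul_mem _ _ (hbX i).1)
  have hb₀j : b₀ j₀ = 1 := by simp [b₀, Finset.sum_apply, hbj, haj]
  have hb₀K (j : Fin n) : b₀ (K j) = 0 := by simp [b₀, Finset.sum_apply, hb.apply_pivot]
  constructor
  · rw [Fin.range_cons, span_insert, hb.span_eq]
    refine le_antisymm (sup_le (span_singleton_le_iff_mem _ _ |>.2 hb₀X) inf_le_left) ?_
    intro x hx
    refine mem_sup.2 ⟨x j₀ • b₀, mem_span_singleton.2 ⟨_, rfl⟩, x - x j₀ • b₀,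
      ⟨sub_mem hx (smul_mem _ _ hb₀X), by simp [hb₀j]⟩, add_sub_cancel _ _⟩
  · intro i j
    cases i using Fin.cases <;> cases j using Fin.cases <;>
      simp [hb₀j, hb₀K, hbj, hb.apply_pivot, (Fin.succ_ne_zero _).symm]
  · intro i j
    cases i using Fin.cases
    · exact hmin _ hb₀X j
    · exact hb.le_of_apply_ne_zero _ j

/-- Gaussian elimination: the pivot of each new row is a column of least `p`-value on which `X`
does not vanish identically. -/
theorem exists_isEchelonBasis [Finite ι] (X : Submodule F (ι → F)) (p : ι → α) :
    ∃ (n : ℕ) (b : Fin n → ι → F) (K : Fin n → ι), IsEchelonBasis X p b K := by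
  induction hr : finrank F X using Nat.strong_induction_on generalizing X with
  | _ r ih =>
  obtain rfl | hX := eq_or_ne X ⊥
  · exact ⟨0, Fin.elim0, Fin.elim0, by simp, fun i => i.elim0, fun i => i.elim0⟩
  obtain ⟨x, hxX, hx⟩ := exists_mem_ne_zero_of_ne_bot hX
  obtain ⟨j₀, ⟨y, hyX, hyj⟩, hmin⟩ := Set.exists_min_image {j | ∃ y ∈ X, y j ≠ 0} p
    (Set.toFinite _) ((Function.ne_iff.1 hx).imp fun j hj => ⟨x, hxX, hj⟩)
  have hlt : X ⊓ LinearMap.ker (LinearMap.proj j₀) < X := inf_lt_left.2 fun h => hyj (h hyX)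
  obtain ⟨n, b, K, hb⟩ := ih _ (hr ▸ finrank_lt_finrank_of_lt hlt) _ rfl
  exact ⟨n + 1, _, _, hb.cons (smul_mem X (y j₀)⁻¹ hyX) (by simp [hyj])
    fun x hx j hj => hmin j ⟨x, hx, hj⟩⟩

end Echelon

theorem IsEchelonBasis.isCleanBasis {α : Type*} [LinearOrder α] {d g : ℕ}
    {U : Submodule ℚ (Fin d → ℚ)} {p : Fin d → α} {b : Fin g → Fin d → ℚ} {K : Fin g → Fin d}
    (hb : IsEchelonBasis U p b K) : IsCleanBasis U b K := by
  refine ⟨linearIndependent_of_apply_eq_ite hb.apply_pivot, hb.span_eq, fun i j hij => ?_,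
    hb.apply_pivot⟩
  simpa [← hij, hb.apply_pivot] using hb.apply_pivot i j

theorem exists_isCleanBasis_le_of_apply_ne_zero {α : Type*} [LinearOrder α] {d g : ℕ}
    (U : Submodule ℚ (Fin d → ℚ)) (hU : finrank ℚ U = g) (p : Fin d → α) :
    ∃ (b : Fin g → Fin d → ℚ) (K : Fin g → Fin d),
      IsCleanBasis U b K ∧ ∀ i j, b i j ≠ 0 → p (K i) ≤ p j := by
  obtain ⟨n, b, K, hb⟩ := exists_isEchelonBasis U p
  obtain rfl : n = g := by
    rw [← hU, ← hb.span_eq,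
      finrank_span_eq_card (linearIndependent_of_apply_eq_ite hb.apply_pivot), Fintype.card_fin]
  exact ⟨b, K, hb.isCleanBasis, hb.le_of_apply_ne_zero⟩

/-- If v ∈ ℕ^d is C-thick with respect to a g-dimensional subspace U (i.e. not C-thin),
then there is a clean basis of U, a number k ∈ {1,…,g} and a set S of k indices such that
every coordinate supporting some basis vector indexed by S has value at least C (g−k) in v. -/
theorem clean_basis_of_thick {d g : ℕ} (U : Submodule ℚ (Fin d → ℚ))
    (hU : Module.finrank ℚ U = g) (v : Fin d → ℕ)
    (C : Fin g → ℕ)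
    (hthick : ¬ CThin g U C v) :
    ∃ (b : Fin g → (Fin d → ℚ)) (K : Fin g → Fin d), IsCleanBasis U b K ∧
      ∃ (k : ℕ) (hk1 : 1 ≤ k) (hkg : k ≤ g) (S : Finset (Fin g)), S.card = k ∧
        ∀ i ∈ S, ∀ j : Fin d, b i j ≠ 0 → C ⟨g - k, by omega⟩ ≤ v j := by
  obtain ⟨b, K, hclean, hle⟩ := exists_isCleanBasis_le_of_apply_ne_zero U hU v
  have hunbounded : ¬ CBounded C (fun j => v (K j)) := fun h => hthick ⟨b, K, hclean, h⟩
  simp only [CBounded, not_forall, not_lt] at hunbounded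
  obtain ⟨k, hk⟩ := hunbounded
  obtain ⟨S, hS, hcard⟩ := Finset.exists_subset_card_eq hk
  refine ⟨b, K, hclean, k + 1, by omega, k.2, S, hcard, fun i hi j hij => ?_⟩
  have hrev : (⟨g - (k + 1), by omega⟩ : Fin g) = k.rev := Fin.ext (Fin.val_rev k).symm
  rw [hrev]
  exact (Finset.mem_filter.1 (hS hi)).2.trans (hle i j hij)
end
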